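/- arXiv:2503.17114 — 2 statements merged into one kernel-verified Lean document; each statement's English description precedes it below -/
import Mathlib

section
/- Let H be a k-cage: a k-uniform linear hypergraph with a distinguished vertex w, a set E_1 of k edges that pairwise intersect exactly in {w}, and a set E_2 of k−1 edges that are pairwise disjoint and disjoint from {w}, on a vertex set of size k(k−1)+1. Then there is no vertex 2-coloring making every edge of E_1 have majority color B and every edge of E_2 have majority color R. -/
lemma cage_biUnion_card_ge {V : Type} [DecidableEq V] {n c : ℕ} (S : Fin n → Finset V)
    (hd : ∀ i j, i ≠ j → Disjoint (S i) (S j)) (hc : ∀ i, c ≤ (S i).card) :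
    n * c ≤ (Finset.univ.biUnion S).card := by
  rw [Finset.card_biUnion (fun i _ j _ h => hd i j h)]
  calc n * c = ∑ _i : Fin n, c := by simp [mul_comm]
    _ ≤ ∑ i, (S i).card := Finset.sum_le_sum (fun i _ => hc i)

lemma cage_arith_false (k m B R : ℕ) (hpar : k = 2*m ∨ k = 2*m+1) (hm : 1 ≤ m)
    (hB : k*(m+1) ≤ B) (hR : (k-1)*(m+1) ≤ R) (ht : B + R + 1 ≤ k*(k-1)+1) : False := by
  obtain ⟨p, rfl⟩ : ∃ p, m = p + 1 := ⟨m-1, by omega⟩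
  rcases hpar with rfl | rfl
  · have h1 : 2*(p+1) - 1 = 2*p+1 := by omega
    rw [h1] at ht hR
    nlinarith
  · have h1 : 2*(p+1)+1 - 1 = 2*p+2 := by omega
    rw [h1] at ht hR
    nlinarith

lemma cage_arith_true (k m B R : ℕ) (hpar : k = 2*m ∨ k = 2*m+1) (hm : 1 ≤ m)
    (hB : k*m ≤ B) (hR : (k-1)*(m+1) ≤ R) (ht : B + R + 1 ≤ k*(k-1)+1) : False := by
  obtain ⟨p, rfl⟩ : ∃ p, m = p + 1 := ⟨m-1, by omega⟩
  rcases hpar with rfl | rfl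
  · have h1 : 2*(p+1) - 1 = 2*p+1 := by omega
    rw [h1] at ht hR
    nlinarith
  · have h1 : 2*(p+1)+1 - 1 = 2*p+2 := by omega
    rw [h1] at ht hR
    nlinarith

/-- A `k`-cage: a `k`-uniform linear hypergraph on `k(k-1)+1` vertices with a hub `w`,
a family `E₁` of `k` edges pairwise intersecting exactly in `{w}`, and a family `E₂`
of `k-1` pairwise disjoint edges avoiding `w`.  There is no vertex 2-coloring
(`false` = R, `true` = B) making every edge of `E₁` have majority color B and every
edge of `E₂` have majority color R (majority = at least `⌊k/2⌋+1` vertices). -/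
theorem stmt4 {V : Type} [Fintype V] [DecidableEq V] (k : ℕ) (hk : 2 ≤ k)
    (hcard : Fintype.card V = k * (k - 1) + 1) (w : V)
    (E1 : Fin k → Finset V) (E2 : Fin (k - 1) → Finset V)
    (hE1card : ∀ i, (E1 i).card = k) (hE2card : ∀ j, (E2 j).card = k)
    (hE1w : ∀ i, w ∈ E1 i)
    (hE1int : ∀ i i', i ≠ i' → E1 i ∩ E1 i' = {w})
    (hE2disj : ∀ j j', j ≠ j' → Disjoint (E2 j) (E2 j'))
    (hE2w : ∀ j, w ∉ E2 j) :
    ¬ ∃ P : V → Bool,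
      (∀ i, k / 2 + 1 ≤ ((E1 i).filter fun z => P z = true).card) ∧
      (∀ j, k / 2 + 1 ≤ ((E2 j).filter fun z => P z = false).card) := by
  rintro ⟨P, hB, hR⟩
  obtain ⟨m, hm⟩ : ∃ m, k / 2 = m := ⟨_, rfl⟩
  rw [hm] at hB hR
  have hpar : k = 2*m ∨ k = 2*m+1 := by omega
  have hm1 : 1 ≤ m := by omega
  -- red sets from E2
  have hRdisj : ∀ j j', j ≠ j' →
      Disjoint ((E2 j).filter (fun z => P z = false)) ((E2 j').filter (fun z => P z = false)) :=
    fun j j' h => ((hE2disj j j' h).mono (Finset.filter_subset _ _) (Finset.filter_subset _ _))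
  have hRcard : (k - 1) * (m + 1) ≤
      (Finset.univ.biUnion (fun j => (E2 j).filter (fun z => P z = false))).card :=
    cage_biUnion_card_ge _ hRdisj (fun j => hR j)
  have hwR : w ∉ Finset.univ.biUnion (fun j => (E2 j).filter (fun z => P z = false)) := by
    simp only [Finset.mem_biUnion]
    rintro ⟨j, -, hj⟩
    exact hE2w j (Finset.mem_filter.mp hj).1
  have hRred : ∀ x ∈ Finset.univ.biUnion (fun j => (E2 j).filter (fun z => P z = false)),
      P x = false := by
    simp only [Finset.mem_biUnion]
    rintro x ⟨j, -, hj⟩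
    exact (Finset.mem_filter.mp hj).2
  cases hPw : P w with
  | false =>
    have hBdisj : ∀ i i', i ≠ i' →
        Disjoint ((E1 i).filter (fun z => P z = true)) ((E1 i').filter (fun z => P z = true)) := by
      intro i i' h
      rw [Finset.disjoint_left]
      intro x hx hx'
      have hx1 := Finset.mem_filter.mp hx
      have hx2 := Finset.mem_filter.mp hx'
      have hxm : x ∈ E1 i ∩ E1 i' := Finset.mem_inter.mpr ⟨hx1.1, hx2.1⟩
      rw [hE1int i i' h, Finset.mem_singleton] at hxm
      rw [hxm, hPw] at hx1
      exact Bool.noConfusion hx1.2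
    have hBcard : k * (m + 1) ≤
        (Finset.univ.biUnion (fun i => (E1 i).filter (fun z => P z = true))).card :=
      cage_biUnion_card_ge _ hBdisj (fun i => hB i)
    have hBblue : ∀ x ∈ Finset.univ.biUnion (fun i => (E1 i).filter (fun z => P z = true)),
        P x = true := by
      simp only [Finset.mem_biUnion]
      rintro x ⟨i, -, hi⟩
      exact (Finset.mem_filter.mp hi).2
    have hdBR : Disjoint (Finset.univ.biUnion (fun i => (E1 i).filter (fun z => P z = true)))
        (Finset.univ.biUnion (fun j => (E2 j).filter (fun z => P z = false))) := by
      rw [Finset.disjoint_left]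
      intro x hx hx'
      have h2 := hRred x hx'
      rw [hBblue x hx] at h2
      exact Bool.noConfusion h2
    have hwB : w ∉ Finset.univ.biUnion (fun i => (E1 i).filter (fun z => P z = true)) := by
      intro h
      have := hBblue w h
      rw [hPw] at this
      exact Bool.noConfusion this
    have htot : (Finset.univ.biUnion (fun i => (E1 i).filter (fun z => P z = true))).card +
        (Finset.univ.biUnion (fun j => (E2 j).filter (fun z => P z = false))).card + 1
        ≤ Fintype.card V := by
      have h1 := Finset.card_le_card (Finset.subset_univ
        ((Finset.univ.biUnion (fun i => (E1 i).filter (fun z => P z = true))) ∪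
         (Finset.univ.biUnion (fun j => (E2 j).filter (fun z => P z = false))) ∪ {w}))
      rw [Finset.card_union_of_disjoint, Finset.card_union_of_disjoint hdBR,
        Finset.card_singleton] at h1
      · simpa [Finset.card_univ] using h1
      · rw [Finset.disjoint_singleton_right, Finset.mem_union]
        rintro (h | h)
        · exact hwB h
        · exact hwR h
    rw [hcard] at htot
    exact cage_arith_false k m _ _ hpar hm1 hBcard hRcard htot
  | true =>
    have hBdisj : ∀ i i', i ≠ i' →
        Disjoint (((E1 i).filter (fun z => P z = true)).erase w)
          (((E1 i').filter (fun z => P z = true)).erase w) := by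
      intro i i' h
      rw [Finset.disjoint_left]
      intro x hx hx'
      have hxw : x ≠ w := Finset.ne_of_mem_erase hx
      have hx1 := Finset.mem_filter.mp (Finset.mem_of_mem_erase hx)
      have hx2 := Finset.mem_filter.mp (Finset.mem_of_mem_erase hx')
      have hxm : x ∈ E1 i ∩ E1 i' := Finset.mem_inter.mpr ⟨hx1.1, hx2.1⟩
      rw [hE1int i i' h, Finset.mem_singleton] at hxm
      exact hxw hxm
    have hBcard : k * m ≤
        (Finset.univ.biUnion (fun i => ((E1 i).filter (fun z => P z = true)).erase w)).card := by
      refine cage_biUnion_card_ge _ hBdisj (fun i => ?_)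
      have h1 := hB i
      have h2 := Finset.pred_card_le_card_erase (a := w)
        (s := (E1 i).filter (fun z => P z = true))
      omega
    have hBblue : ∀ x ∈ Finset.univ.biUnion
        (fun i => ((E1 i).filter (fun z => P z = true)).erase w), P x = true := by
      simp only [Finset.mem_biUnion]
      rintro x ⟨i, -, hi⟩
      exact (Finset.mem_filter.mp (Finset.mem_of_mem_erase hi)).2
    have hdBR : Disjoint
        (Finset.univ.biUnion (fun i => ((E1 i).filter (fun z => P z = true)).erase w))
        (Finset.univ.biUnion (fun j => (E2 j).filter (fun z => P z = false))) := by
      rw [Finset.disjoint_left]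
      intro x hx hx'
      have h2 := hRred x hx'
      rw [hBblue x hx] at h2
      exact Bool.noConfusion h2
    have hwB : w ∉ Finset.univ.biUnion
        (fun i => ((E1 i).filter (fun z => P z = true)).erase w) := by
      simp only [Finset.mem_biUnion]
      rintro ⟨i, -, hi⟩
      exact Finset.ne_of_mem_erase hi rfl
    have htot : (Finset.univ.biUnion
          (fun i => ((E1 i).filter (fun z => P z = true)).erase w)).card +
        (Finset.univ.biUnion (fun j => (E2 j).filter (fun z => P z = false))).card + 1
        ≤ Fintype.card V := by
      have h1 := Finset.card_le_card (Finset.subset_univ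
        ((Finset.univ.biUnion (fun i => ((E1 i).filter (fun z => P z = true)).erase w)) ∪
         (Finset.univ.biUnion (fun j => (E2 j).filter (fun z => P z = false))) ∪ {w}))
      rw [Finset.card_union_of_disjoint, Finset.card_union_of_disjoint hdBR,
        Finset.card_singleton] at h1
      · simpa [Finset.card_univ] using h1
      · rw [Finset.disjoint_singleton_right, Finset.mem_union]
        rintro (h | h)
        · exact hwB h
        · exact hwR h
    rw [hcard] at htot
    exact cage_arith_true k m _ _ hpar hm1 hBcard hRcard htot
end

section
/- Let C_1 = u_1 e_1 u_2 e_2 ... u_k e_k u_1 and C_2 = u_1 f_1 v_2 f_2 ... v_ℓ f_ℓ u_1 be two 3-uniform loose cycles of odd lengths k and ℓ sharing only the vertex u_1 (a (k,ℓ)-odd butterfly), where each e_i = {u_i, w_i, u_{i+1}} with distinct auxiliary vertices w_i, and similarly for f_j. Color e_i red if i is even and blue if i is odd, and f_j red if j is odd and blue if j is even. Then this edge-coloring is not a MAJ-coloring. -/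
/-- The majority color (`true` = B, `false` = R) of a 3-uniform edge `{a,b,c}`
under the vertex 2-coloring `P`. -/
def majColor {V : Type} (P : V → Bool) (a b c : V) : Bool :=
  (P a && P b) || (P a && P c) || (P b && P c)

/-- If an edge has majority color `col` and one endpoint has color `!col`,
the other endpoint must have color `col`. -/
lemma maj_force : ∀ (x y z col : Bool),
    ((x && y) || (x && z) || (y && z)) = col → x = !col → z = col := by decide

/-- A `(k,ℓ)`-odd butterfly: two 3-uniform loose cycles
`C₁ = u₁e₁u₂ … uₖeₖu₁` and `C₂ = u₁f₁v₂ … v_ℓ f_ℓ u₁` of odd lengths `k, ℓ`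
sharing only the vertex `u₁`, where `e_i = {u_i, w_i, u_{i+1}}` with private
vertices `w_i`, and `f_j = {v_j, x_j, v_{j+1}}` with private vertices `x_j`
(`v₁ = u₁`, all vertices distinct apart from that identification).
Coloring `e_i` red (`false`) for even `i` and blue (`true`) for odd `i`, and
`f_j` red for odd `j` and blue for even `j` (1-indexed), is not a MAJ-coloring. -/
theorem stmt5 {V : Type} (k ℓ : ℕ) (hk : Odd k) (hl : Odd ℓ)
    (hk3 : 3 ≤ k) (hl3 : 3 ≤ ℓ)
    (u w : Fin k → V) (v x : Fin ℓ → V)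
    (hu : Function.Injective u) (hw : Function.Injective w)
    (hv : Function.Injective v) (hx : Function.Injective x)
    (hshare : v ⟨0, by omega⟩ = u ⟨0, by omega⟩)
    (huv : ∀ i j, u i = v j → i = ⟨0, by omega⟩ ∧ j = ⟨0, by omega⟩)
    (huw : ∀ i j, u i ≠ w j) (hux : ∀ i j, u i ≠ x j)
    (hvw : ∀ i j, v i ≠ w j) (hvx : ∀ i j, v i ≠ x j)
    (hwx : ∀ i j, w i ≠ x j) :
    ¬ ∃ P : V → Bool,
      (∀ i : Fin k,
        majColor P (u i) (w i) (u (i + ⟨1, by omega⟩)) =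
          decide ((i.1 + 1) % 2 = 1)) ∧
      (∀ j : Fin ℓ,
        majColor P (v j) (x j) (v (j + ⟨1, by omega⟩)) =
          decide ((j.1 + 1) % 2 = 0)) := by
  rintro ⟨P, h1, h2⟩
  have hk0 : 0 < k := by omega
  have hl0 : 0 < ℓ := by omega
  simp only [majColor] at h1 h2
  cases hPu : P (u ⟨0, hk0⟩) with
  | false =>
    -- Cycle C₁ gives a contradiction when P(u₀) = false.
    have main : ∀ n (h : n < k), P (u ⟨n, h⟩) = decide (n % 2 = 1) := by
      intro n
      induction n with
      | zero => intro h; simpa using hPu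
      | succ m ih =>
        intro h
        have hm : m < k := by omega
        have hedge := h1 ⟨m, hm⟩
        have hsucc : (⟨m, hm⟩ + ⟨1, by omega⟩ : Fin k) = ⟨m + 1, h⟩ := by
          apply Fin.ext
          simp [Fin.add_def, Nat.mod_eq_of_lt h]
        rw [hsucc] at hedge
        have hpar : (decide (m % 2 = 1) : Bool) = !(decide ((m + 1) % 2 = 1)) := by
          rcases Nat.mod_two_eq_zero_or_one m with h' | h' <;>
            simp [Nat.add_mod, h']
        exact maj_force _ _ _ _ hedge (by rw [ih hm, hpar])
    have hlast : k - 1 < k := by omega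
    have hedge := h1 ⟨k - 1, hlast⟩
    have hsucc : (⟨k - 1, hlast⟩ + ⟨1, by omega⟩ : Fin k) = ⟨0, hk0⟩ := by
      apply Fin.ext
      simp [Fin.add_def, Nat.sub_add_cancel (by omega : 1 ≤ k)]
    rw [hsucc] at hedge
    have hcol : ((k - 1 : ℕ) + 1) % 2 = 1 := by
      rcases hk with ⟨t, ht⟩; omega
    have hprev : P (u ⟨k - 1, hlast⟩) = !(decide ((k - 1 + 1) % 2 = 1)) := by
      rw [main (k - 1) hlast]
      have : (k - 1) % 2 = 0 := by rcases hk with ⟨t, ht⟩; omega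
      simp [this, hcol]
    have := maj_force _ _ _ _ hedge hprev
    rw [hPu] at this
    simp [hcol] at this
  | true =>
    -- Cycle C₂ gives a contradiction when P(v₀) = P(u₀) = true.
    have hPv : P (v ⟨0, hl0⟩) = true := by rw [hshare]; exact hPu
    have main : ∀ n (h : n < ℓ), P (v ⟨n, h⟩) = decide (n % 2 = 0) := by
      intro n
      induction n with
      | zero => intro h; simpa using hPv
      | succ m ih =>
        intro h
        have hm : m < ℓ := by omega
        have hedge := h2 ⟨m, hm⟩
        have hsucc : (⟨m, hm⟩ + ⟨1, by omega⟩ : Fin ℓ) = ⟨m + 1, h⟩ := by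
          apply Fin.ext
          simp [Fin.add_def, Nat.mod_eq_of_lt h]
        rw [hsucc] at hedge
        have hpar : (decide (m % 2 = 0) : Bool) = !(decide ((m + 1) % 2 = 0)) := by
          rcases Nat.mod_two_eq_zero_or_one m with h' | h' <;>
            simp [Nat.add_mod, h']
        exact maj_force _ _ _ _ hedge (by rw [ih hm, hpar])
    have hlast : ℓ - 1 < ℓ := by omega
    have hedge := h2 ⟨ℓ - 1, hlast⟩
    have hsucc : (⟨ℓ - 1, hlast⟩ + ⟨1, by omega⟩ : Fin ℓ) = ⟨0, hl0⟩ := by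
      apply Fin.ext
      simp [Fin.add_def, Nat.sub_add_cancel (by omega : 1 ≤ ℓ)]
    rw [hsucc] at hedge
    have hcol : ¬ (((ℓ - 1 : ℕ) + 1) % 2 = 0) := by
      rcases hl with ⟨t, ht⟩; omega
    have hprev : P (v ⟨ℓ - 1, hlast⟩) = !(decide ((ℓ - 1 + 1) % 2 = 0)) := by
      rw [main (ℓ - 1) hlast]
      have : (ℓ - 1) % 2 = 0 := by rcases hl with ⟨t, ht⟩; omega
      simp [this, hcol]
    have := maj_force _ _ _ _ hedge hprev
    rw [hPv] at this
    simp [hcol] at this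
end
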